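/- Let 𝔤 = 𝔤_{4.4} be the 4-dimensional real Lie algebra with basis e₁,...,e₄ and nonzero brackets [e₁,e₄] = e₁, [e₂,e₄] = e₁ + e₂, [e₃,e₄] = e₂ + e₃. A 4×4 real matrix R equals η·Id + D for some η ∈ ℝ and some derivation D of 𝔤 if and only if R₂₁ = R₃₁ = R₄₁ = 0, R₃₂ = R₄₂ = R₄₃ = 0, R₂₃ = R₁₂, and R₁₁ = R₂₂ = R₃₃. In this case η = R₄₄. -/

import Mathlib

/-!
Write `V = span(e₁, e₂, e₃) = [𝔤, 𝔤]`, on which `ad e₄` acts (via `x ↦ [x, e₄]`) as a single Jordan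
block `J` with eigenvalue `1`. A derivation `D` preserves `V`, and applying it to `[x, e₄] = J x`
gives `[D|_V, J] = d J`, where `d` is the `e₄`-coefficient of `D e₄`; taking traces gives `d = 0`.
So `D|_V` commutes with `J`, i.e. it is an upper triangular Toeplitz matrix, while the `V`-part of
`D e₄` is arbitrary. Adding `η • 1` only moves the diagonal, and `η` is read off from the entry
`R₄₄ = η + d = η`.
-/

open Matrix

def br (x y : Fin 4 → ℝ) : Fin 4 → ℝ :=
  ![(x 0 * y 3 - x 3 * y 0) + (x 1 * y 3 - x 3 * y 1), (x 1 * y 3 - x 3 * y 1) + (x 2 * y 3 - x 3 * y 2), (x 2 * y 3 - x 3 * y 2), (0:ℝ)]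

def IsDer (D : Matrix (Fin 4) (Fin 4) ℝ) : Prop :=
  ∀ x y : Fin 4 → ℝ, D.mulVec (br x y) = br (D.mulVec x) y + br x (D.mulVec y)

/-- The entry pattern of the matrices `η • 1 + D`, `D` a derivation (entries are `0`-indexed). -/
def IsDerPattern (R : Matrix (Fin 4) (Fin 4) ℝ) : Prop :=
  R 1 0 = 0 ∧ R 2 0 = 0 ∧ R 3 0 = 0 ∧ R 2 1 = 0 ∧ R 3 1 = 0 ∧ R 3 2 = 0 ∧
    R 1 2 = R 0 1 ∧ R 0 0 = R 1 1 ∧ R 1 1 = R 2 2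

theorem isDerPattern_smul_one_add (c : ℝ) (D : Matrix (Fin 4) (Fin 4) ℝ) :
    IsDerPattern (c • 1 + D) ↔ IsDerPattern D := by
  simp [IsDerPattern, one_apply]

theorem IsDer.isDerPattern {D : Matrix (Fin 4) (Fin 4) ℝ} (hD : IsDer D) :
    IsDerPattern D ∧ D 3 3 = 0 := by
  have h14 := hD ![1, 0, 0, 0] ![0, 0, 0, 1]
  have h24 := hD ![0, 1, 0, 0] ![0, 0, 0, 1]
  have h34 := hD ![0, 0, 1, 0] ![0, 0, 0, 1]
  simp only [funext_iff, Fin.forall_fin_succ, IsEmpty.forall_iff] at h14 h24 h34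
  simp [mulVec, br, dotProduct, Fin.sum_univ_four] at h14 h24 h34
  refine ⟨⟨?_, ?_, ?_, ?_, ?_, ?_, ?_, ?_, ?_⟩, ?_⟩ <;> linarith

theorem isDer_of_isDerPattern {D : Matrix (Fin 4) (Fin 4) ℝ} (hD : IsDerPattern D)
    (h33 : D 3 3 = 0) : IsDer D := by
  obtain ⟨h10, h20, h30, h21, h31, h32, h12, h00, h11⟩ := hD
  intro x y
  ext i
  fin_cases i <;>
    simp [mulVec, br, dotProduct, Fin.sum_univ_four, h10, h20, h30, h21, h31, h32, h33, h12,
      h00, h11] <;>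
    ring

theorem stmt_14 (R : Matrix (Fin 4) (Fin 4) ℝ) :
    ((∃ (η : ℝ) (D : Matrix (Fin 4) (Fin 4) ℝ), IsDer D ∧
        R = η • (1 : Matrix (Fin 4) (Fin 4) ℝ) + D) ↔
      (R 1 0 = 0 ∧ R 2 0 = 0 ∧ R 3 0 = 0 ∧ R 2 1 = 0 ∧ R 3 1 = 0 ∧ R 3 2 = 0 ∧ R 1 2 = R 0 1 ∧ R 0 0 = R 1 1 ∧ R 1 1 = R 2 2)) ∧
    (∀ (η : ℝ) (D : Matrix (Fin 4) (Fin 4) ℝ), IsDer D →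
      R = η • (1 : Matrix (Fin 4) (Fin 4) ℝ) + D → η = R 3 3) := by
  refine ⟨⟨?_, fun hR => ?_⟩, ?_⟩
  · rintro ⟨η, D, hD, rfl⟩
    exact (isDerPattern_smul_one_add η D).2 hD.isDerPattern.1
  · have hD : IsDerPattern (-R 3 3 • 1 + R) := (isDerPattern_smul_one_add _ R).2 hR
    refine ⟨R 3 3, -R 3 3 • 1 + R, isDer_of_isDerPattern hD (by simp), ?_⟩
    rw [neg_smul, add_neg_cancel_left]
  · rintro η D hD rfl
    simp [hD.isDerPattern.2]
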